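/- Let 𝒜 = a₁₂e₁₂ + a₁₃e₁₃ + a₂₃e₂₃ be a nonzero bivector in Cl(0,3) and write ‖𝒜‖ = √(a₁₂² + a₁₃² + a₂₃²). Then for any integers c₁, c₂, exp( (1/2)·log(‖𝒜‖²) + π·(𝒜/‖𝒜‖)·(1/2 + c₁(1 + I) + c₂(1 - I)) ) = 𝒜. -/

import Mathlib

open Real CliffordAlgebra

noncomputable section

/-- The quadratic form of signature (0,3): `Q(x) = -(x₁² + x₂² + x₃²)`. -/
def Q03 : QuadraticForm ℝ (Fin 3 → ℝ) := QuadraticMap.weightedSumSquares ℝ ![-1, -1, -1]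

/-- The real Clifford algebra Cl(0,3). -/
abbrev Cl03 := CliffordAlgebra Q03

/-- The canonical (module) topology on the finite-dimensional real algebra Cl(0,3). -/
instance : TopologicalSpace Cl03 := moduleTopology ℝ Cl03

/-- The orthonormal generators `e₁, e₂, e₃` (indexed here by `0, 1, 2`). -/
def e (i : Fin 3) : Cl03 := ι Q03 (Pi.single i 1)

/-- The pseudoscalar `I = e₁e₂e₃`. -/
def I3 : Cl03 := e 0 * e 1 * e 2

/-- The exponential `exp M = ∑ₖ Mᵏ/k!` in Cl(0,3). -/
def expCl (M : Cl03) : Cl03 := ∑' n : ℕ, (n.factorial : ℝ)⁻¹ • M ^ n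

/-- `atan2 y x` is the argument in `(-π, π]` of the complex number `x + iy`. -/
def atan2 (y x : ℝ) : ℝ := Complex.arg ⟨x, y⟩

/-! ### Auxiliary algebraic lemmas -/

lemma Q03_single (i : Fin 3) : Q03 (Pi.single i 1) = -1 := by
  fin_cases i <;>
    simp [Q03, QuadraticMap.weightedSumSquares_apply, Fin.sum_univ_three, Pi.single_apply]

lemma e_sq (i : Fin 3) : e i * e i = -1 := by
  rw [e, ι_sq_scalar, Q03_single, map_neg, map_one]

lemma e_swap {i j : Fin 3} (h : i ≠ j) : e j * e i = -(e i * e j) := by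
  have h2 : Q03.IsOrtho (Pi.single i 1) (Pi.single j 1) := by
    fin_cases i <;> fin_cases j <;> first
      | exact absurd rfl h
      | simp [QuadraticMap.IsOrtho, Q03, QuadraticMap.weightedSumSquares_apply,
          Fin.sum_univ_three, Pi.single_apply]
  have := ι_mul_ι_add_swap_of_isOrtho (Q := Q03) h2
  rw [e, e]
  linear_combination (norm := noncomm_ring) this

lemma e_sq' (i : Fin 3) (x : Cl03) : e i * (e i * x) = -x := by
  rw [← mul_assoc, e_sq, neg_one_mul]

lemma e10 : e 1 * e 0 = -(e 0 * e 1) := e_swap (by decide)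
lemma e20 : e 2 * e 0 = -(e 0 * e 2) := e_swap (by decide)
lemma e21 : e 2 * e 1 = -(e 1 * e 2) := e_swap (by decide)
lemma e10' (x : Cl03) : e 1 * (e 0 * x) = -(e 0 * (e 1 * x)) := by
  rw [← mul_assoc, e10, neg_mul, mul_assoc]
lemma e20' (x : Cl03) : e 2 * (e 0 * x) = -(e 0 * (e 2 * x)) := by
  rw [← mul_assoc, e20, neg_mul, mul_assoc]
lemma e21' (x : Cl03) : e 2 * (e 1 * x) = -(e 1 * (e 2 * x)) := by
  rw [← mul_assoc, e21, neg_mul, mul_assoc]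

lemma I3_sq : I3 * I3 = 1 := by
  simp only [I3, mul_assoc, e_sq, e_sq', e10, e20, e21, e10', e20', e21',
    mul_neg, neg_mul, neg_neg, mul_one, mul_neg_one]

lemma I3_comm_e (i : Fin 3) : e i * I3 = I3 * e i := by
  match i with
  | 0 | 1 | 2 =>
    simp only [I3, mul_assoc, e_sq, e_sq', e10, e20, e21, e10', e20', e21',
      mul_neg, neg_mul, neg_neg, mul_one, mul_neg_one]

lemma bA_comm_I3 (a12 a13 a23 : ℝ)
    (bA : Cl03) (hbA : bA = a12 • (e 0 * e 1) + a13 • (e 0 * e 2) + a23 • (e 1 * e 2)) :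
    bA * I3 = I3 * bA := by
  have pair : ∀ i j : Fin 3, (e i * e j) * I3 = I3 * (e i * e j) := fun i j => by
    rw [mul_assoc, I3_comm_e j, ← mul_assoc, I3_comm_e i, mul_assoc]
  subst hbA
  simp only [add_mul, mul_add, smul_mul_assoc, mul_smul_comm, pair]

lemma bA_sq (a12 a13 a23 : ℝ)
    (bA : Cl03) (hbA : bA = a12 • (e 0 * e 1) + a13 • (e 0 * e 2) + a23 • (e 1 * e 2)) :
    bA * bA = (-(a12 ^ 2 + a13 ^ 2 + a23 ^ 2)) • (1 : Cl03) := by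
  subst hbA
  simp only [add_mul, mul_add, smul_mul_assoc, mul_smul_comm, smul_smul, mul_assoc,
    e_sq, e_sq', e10, e20, e21, e10', e20', e21',
    mul_neg, neg_mul, neg_neg, mul_one, mul_neg_one, smul_neg]
  module

/-! ### Topological facts about `Cl03` -/

instance : IsModuleTopology ℝ Cl03 := ⟨rfl⟩

instance : ContinuousAdd Cl03 := IsModuleTopology.toContinuousAdd ℝ Cl03

instance : IsTopologicalAddGroup Cl03 :=
  { continuous_neg := IsModuleTopology.continuous_neg ℝ Cl03 }

instance : T2Space Cl03 := by
  let b := Module.Basis.ofVectorSpace ℝ Cl03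
  let f : Cl03 →ₗ[ℝ] (Module.Basis.ofVectorSpaceIndex ℝ Cl03 → ℝ) :=
    Finsupp.lcoeFun.comp b.repr.toLinearMap
  have hinj : Function.Injective f := by
    intro x y hxy
    exact b.repr.injective (DFunLike.coe_injective hxy)
  have hcont : Continuous f := IsModuleTopology.continuous_of_linearMap f
  exact T2Space.of_injective_continuous hinj hcont

/-- exponential of the logarithm of a nonzero bivector in Cl(0,3). -/
theorem exp_log_bivector_Cl03
    (a12 a13 a23 n : ℝ) (c1 c2 : ℤ) (bA : Cl03)
    (hbA : bA = a12 • (e 0 * e 1) + a13 • (e 0 * e 2) + a23 • (e 1 * e 2))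
    (hn : n = Real.sqrt (a12 ^ 2 + a13 ^ 2 + a23 ^ 2))
    (hnpos : 0 < n) :
    expCl (algebraMap ℝ Cl03 ((1 / 2) * Real.log (n ^ 2)) +
      (π / n) • (bA * (algebraMap ℝ Cl03 (1 / 2) + (c1 : ℝ) • (1 + I3) +
        (c2 : ℝ) • (1 - I3)))) = bA := by
  have hn0 : n ≠ 0 := ne_of_gt hnpos
  have hs : a12 ^ 2 + a13 ^ 2 + a23 ^ 2 = n ^ 2 := by
    rw [hn, Real.sq_sqrt (by positivity)]
  -- the normalized bivector
  set u : Cl03 := n⁻¹ • bA with hu_def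
  have hbAu : bA = n • u := by
    rw [hu_def, smul_smul, mul_inv_cancel₀ hn0, one_smul]
  have huu : u * u = -1 := by
    rw [hu_def, smul_mul_assoc, mul_smul_comm, smul_smul,
      bA_sq a12 a13 a23 bA hbA, hs, smul_smul]
    rw [show n⁻¹ * n⁻¹ * -n ^ 2 = -1 by field_simp, neg_smul, one_smul]
  have huI : u * I3 = I3 * u := by
    rw [hu_def, smul_mul_assoc, mul_smul_comm, bA_comm_I3 a12 a13 a23 bA hbA]
  -- the embedding of ℂ sending I to u
  set ψ : ℂ →ₐ[ℝ] Cl03 := Complex.liftAux u huu with hψ_def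
  have hψ : ∀ z : ℂ, ψ z = algebraMap ℝ Cl03 z.re + z.im • u := fun z =>
    Complex.liftAux_apply u huu z
  have hψI3 : ∀ z : ℂ, ψ z * I3 = I3 * ψ z := by
    intro z
    rw [hψ, add_mul, mul_add, smul_mul_assoc, mul_smul_comm, huI, Algebra.commutes]
  -- the idempotents
  set P : Cl03 := (2⁻¹ : ℝ) • (1 + I3) with hP_def
  set Pm : Cl03 := (2⁻¹ : ℝ) • (1 - I3) with hPm_def
  have hPadd : P + Pm = 1 := by rw [hP_def, hPm_def]; module
  have hPP : P * P = P := by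
    rw [hP_def]
    simp only [smul_mul_assoc, mul_smul_comm, smul_smul, add_mul, mul_add, one_mul, mul_one, I3_sq]
    module
  have hPmPm : Pm * Pm = Pm := by
    rw [hPm_def]
    simp only [smul_mul_assoc, mul_smul_comm, smul_smul, sub_mul, mul_sub, one_mul, mul_one, I3_sq]
    module
  have hPPm : P * Pm = 0 := by
    rw [hP_def, hPm_def]
    simp only [smul_mul_assoc, mul_smul_comm, smul_smul, add_mul, mul_add, sub_mul, mul_sub,
      one_mul, mul_one, I3_sq]
    module
  have hPmP : Pm * P = 0 := by
    rw [hP_def, hPm_def]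
    simp only [smul_mul_assoc, mul_smul_comm, smul_smul, add_mul, mul_add, sub_mul, mul_sub,
      one_mul, mul_one, I3_sq]
    module
  have hψP : ∀ z : ℂ, ψ z * P = P * ψ z := by
    intro z
    rw [hP_def, smul_mul_assoc, mul_smul_comm, mul_add, add_mul, one_mul, mul_one, hψI3]
  have hψPm : ∀ z : ℂ, ψ z * Pm = Pm * ψ z := by
    intro z
    rw [hPm_def, smul_mul_assoc, mul_smul_comm, mul_sub, sub_mul, one_mul, mul_one, hψI3]
  -- the linear map Φ : ℂ × ℂ → Cl03
  set Φ : ℂ × ℂ →ₗ[ℝ] Cl03 :=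
    (LinearMap.mulLeft ℝ P ∘ₗ ψ.toLinearMap ∘ₗ LinearMap.fst ℝ ℂ ℂ) +
      (LinearMap.mulLeft ℝ Pm ∘ₗ ψ.toLinearMap ∘ₗ LinearMap.snd ℝ ℂ ℂ) with hΦ_def
  have hΦ : ∀ p : ℂ × ℂ, Φ p = P * ψ p.1 + Pm * ψ p.2 := fun p => rfl
  have hT : ∀ (A B : Cl03) (_ : ∀ z : ℂ, ψ z * B = B * ψ z) (a b : ℂ),
      (A * ψ a) * (B * ψ b) = (A * B) * ψ (a * b) := by
    intro A B hAB a b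
    rw [mul_assoc, ← mul_assoc (ψ a), hAB, mul_assoc, ← map_mul, ← mul_assoc]
  have hΦmul : ∀ p q : ℂ × ℂ, Φ (p * q) = Φ p * Φ q := by
    intro p q
    rw [hΦ, hΦ, hΦ, add_mul, mul_add, mul_add,
      hT P P (hψP) p.1 q.1, hT P Pm (hψPm) p.1 q.2,
      hT Pm P (hψP) p.2 q.1, hT Pm Pm (hψPm) p.2 q.2,
      hPP, hPPm, hPmP, hPmPm, zero_mul, zero_mul, add_zero, zero_add]
    rfl
  have hΦone : Φ 1 = 1 := by
    rw [hΦ]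
    show P * ψ 1 + Pm * ψ 1 = 1
    rw [map_one, mul_one, mul_one, hPadd]
  have hΦpow : ∀ (p : ℂ × ℂ) (k : ℕ), Φ (p ^ k) = (Φ p) ^ k := by
    intro p k
    induction k with
    | zero => simpa using hΦone
    | succ m ih => rw [pow_succ, pow_succ, hΦmul, ih]
  -- the two complex logarithms
  set z : ℂ := ⟨Real.log n, π * (1 / 2 + 2 * (c1 : ℝ))⟩ with hz_def
  set w : ℂ := ⟨Real.log n, π * (1 / 2 + 2 * (c2 : ℝ))⟩ with hw_def
  -- the exponent is Φ (z, w)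
  have hM : algebraMap ℝ Cl03 ((1 / 2) * Real.log (n ^ 2)) +
      (π / n) • (bA * (algebraMap ℝ Cl03 (1 / 2) + (c1 : ℝ) • (1 + I3) +
        (c2 : ℝ) • (1 - I3))) = Φ (z, w) := by
    have hlog : (1 / 2 : ℝ) * Real.log (n ^ 2) = Real.log n := by
      rw [Real.log_pow]; push_cast; ring
    have hscale : (π / n) • (bA * (algebraMap ℝ Cl03 (1 / 2) + (c1 : ℝ) • (1 + I3) +
        (c2 : ℝ) • (1 - I3))) = π • (u * (algebraMap ℝ Cl03 (1 / 2) + (c1 : ℝ) • (1 + I3) +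
        (c2 : ℝ) • (1 - I3))) := by
      rw [hbAu, smul_mul_assoc, smul_smul, div_mul_cancel₀ _ hn0]
    rw [hlog, hscale, hΦ]
    show _ = P * ψ z + Pm * ψ w
    rw [hψ, hψ]
    show algebraMap ℝ Cl03 (Real.log n) + π • (u * (algebraMap ℝ Cl03 (1 / 2) +
        (c1 : ℝ) • (1 + I3) + (c2 : ℝ) • (1 - I3))) =
      P * (algebraMap ℝ Cl03 (Real.log n) + (π * (1 / 2 + 2 * (c1 : ℝ))) • u) +
        Pm * (algebraMap ℝ Cl03 (Real.log n) + (π * (1 / 2 + 2 * (c2 : ℝ))) • u)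
    rw [hP_def, hPm_def]
    simp only [Algebra.algebraMap_eq_smul_one, mul_add, add_mul, mul_sub, sub_mul,
      smul_mul_assoc, mul_smul_comm, smul_smul, smul_add, smul_sub, one_mul, mul_one, huI]
    module
  rw [hM]
  -- the series
  have h1 : HasSum (fun k : ℕ => (k.factorial : ℝ)⁻¹ • z ^ k) (Complex.exp z) := by
    have := NormedSpace.exp_series_hasSum_exp' (𝕂 := ℝ) (x := z)
    rwa [← Complex.exp_eq_exp_ℂ] at this
  have h2 : HasSum (fun k : ℕ => (k.factorial : ℝ)⁻¹ • w ^ k) (Complex.exp w) := by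
    have := NormedSpace.exp_series_hasSum_exp' (𝕂 := ℝ) (x := w)
    rwa [← Complex.exp_eq_exp_ℂ] at this
  have hprod : HasSum (fun k : ℕ => (k.factorial : ℝ)⁻¹ • ((z, w) ^ k))
      (Complex.exp z, Complex.exp w) := h1.prodMk h2
  have hΦcont : Continuous Φ := Φ.continuous_of_finiteDimensional
  have hmapped : HasSum (fun k : ℕ => Φ ((k.factorial : ℝ)⁻¹ • ((z, w) ^ k)))
      (Φ (Complex.exp z, Complex.exp w)) := hprod.map Φ hΦcont
  have heq : (fun k : ℕ => Φ ((k.factorial : ℝ)⁻¹ • ((z, w) ^ k))) =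
      fun k : ℕ => (k.factorial : ℝ)⁻¹ • (Φ (z, w)) ^ k :=
    funext fun k => by rw [map_smul, hΦpow]
  rw [heq] at hmapped
  rw [expCl, hmapped.tsum_eq]
  -- compute the complex exponentials
  have hcos1 : Real.cos (π * (1 / 2 + 2 * (c1 : ℝ))) = 0 := by
    rw [show π * (1 / 2 + 2 * (c1 : ℝ)) = π / 2 + (c1 : ℝ) * (2 * π) by ring,
      Real.cos_add_int_mul_two_pi, Real.cos_pi_div_two]
  have hsin1 : Real.sin (π * (1 / 2 + 2 * (c1 : ℝ))) = 1 := by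
    rw [show π * (1 / 2 + 2 * (c1 : ℝ)) = π / 2 + (c1 : ℝ) * (2 * π) by ring,
      Real.sin_add_int_mul_two_pi, Real.sin_pi_div_two]
  have hcos2 : Real.cos (π * (1 / 2 + 2 * (c2 : ℝ))) = 0 := by
    rw [show π * (1 / 2 + 2 * (c2 : ℝ)) = π / 2 + (c2 : ℝ) * (2 * π) by ring,
      Real.cos_add_int_mul_two_pi, Real.cos_pi_div_two]
  have hsin2 : Real.sin (π * (1 / 2 + 2 * (c2 : ℝ))) = 1 := by
    rw [show π * (1 / 2 + 2 * (c2 : ℝ)) = π / 2 + (c2 : ℝ) * (2 * π) by ring,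
      Real.sin_add_int_mul_two_pi, Real.sin_pi_div_two]
  have hez : Complex.exp z = (n : ℂ) * Complex.I := by
    rw [hz_def, Complex.mk_eq_add_mul_I, Complex.exp_add, Complex.exp_mul_I,
      ← Complex.ofReal_cos, ← Complex.ofReal_sin, hcos1, hsin1,
      ← Complex.ofReal_exp, Real.exp_log hnpos]
    push_cast
    ring
  have hew : Complex.exp w = (n : ℂ) * Complex.I := by
    rw [hw_def, Complex.mk_eq_add_mul_I, Complex.exp_add, Complex.exp_mul_I,
      ← Complex.ofReal_cos, ← Complex.ofReal_sin, hcos2, hsin2,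
      ← Complex.ofReal_exp, Real.exp_log hnpos]
    push_cast
    ring
  have hψnI : ψ ((n : ℂ) * Complex.I) = n • u := by
    rw [hψ]
    simp [Complex.mul_I_re, Complex.mul_I_im]
  rw [hez, hew, hΦ]
  show P * ψ ((n : ℂ) * Complex.I) + Pm * ψ ((n : ℂ) * Complex.I) = bA
  rw [hψnI, ← add_mul, hPadd, one_mul, ← hbAu]
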